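/- arXiv:1504.05994 — 3 statements merged into one kernel-verified Lean document; each statement's English description precedes it below -/
import Mathlib

section
/- As ℓ → ∞, the Gaussian process quadrature weights with squared exponential covariance and 1-D UT sigma points converge to the UT weights: the limit of W_0(ℓ) is κ/(κ+1) and the limits of W_1(ℓ) and W_2(ℓ) are both 1/(2(κ+1)), where W_0(ℓ) = e^(-(κ+1)/(2(ℓ²+1))) ℓ (e^((κ+1)/(2(ℓ²+1))) - 2e^(3(κ+1)/(2ℓ²)) + e^((κ+1)/(2(ℓ²+1))) e^(2(κ+1)/ℓ²)) / (√(ℓ²+1) (e^((κ+1)/ℓ²) - 1)²) and W_1(ℓ) = W_2(ℓ) = -ℓ e^((2ℓ²+3)(κ+1)/(2ℓ²(ℓ²+1))) (e^((κ+1)/(2(ℓ²+1))) - e^((κ+1)/(2ℓ²))) / (√(ℓ²+1) (e^((κ+1)/ℓ²) - 1)²). -/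
/-!
With `c = κ + 1`, `E = exp (c / ℓ²)` and the small exponent `δ = c / (2ℓ²(ℓ² + 1))`, both weights
rewrite exactly as combinations of `ℓ / √(ℓ² + 1)`, `E`, `ℓ⁴ (exp δ - 1)` and `ℓ² (E - 1)`.
Since `x (exp (c / x) - 1) → c` as `x → ∞`, these tend to `1`, `1`, `c / 2` and `c`, which gives
`W₀ → 1 - 1/c = κ/(κ+1)` and `W₁ = W₂ → (c/2)/c² = 1/(2(κ+1))`.
-/

open Filter Real Topology

theorem tendsto_exp_sub_one_div_nhdsNE :
    Tendsto (fun x : ℝ => (exp x - 1) / x) (𝓝[≠] 0) (𝓝 1) := by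
  have h := hasDerivAt_iff_tendsto_slope.1 (hasDerivAt_exp 0)
  simpa [slope_fun_def, div_eq_inv_mul] using h

theorem Filter.Tendsto.mul_exp_div_sub_one {α : Type*} {l : Filter α} {g : α → ℝ}
    (hg : Tendsto g l atTop) (c : ℝ) :
    Tendsto (fun a => g a * (Real.exp (c / g a) - 1)) l (𝓝 c) := by
  rcases eq_or_ne c 0 with rfl | hc
  · simpa using tendsto_const_nhds
  have hx : Tendsto (fun a => c / g a) l (𝓝[≠] 0) :=
    tendsto_nhdsWithin_of_tendsto_nhds_of_eventually_within _
      (tendsto_const_nhds.div_atTop hg)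
      (by filter_upwards [hg.eventually_gt_atTop 0] with a ha using div_ne_zero hc ha.ne')
  have h := (tendsto_exp_sub_one_div_nhdsNE.comp hx).const_mul c
  rw [mul_one] at h
  refine h.congr' ?_
  filter_upwards [hg.eventually_gt_atTop 0] with a ha
  simp only [Function.comp_apply]
  field_simp

theorem Filter.Tendsto.exp_div_atTop {α : Type*} {l : Filter α} {g : α → ℝ}
    (hg : Tendsto g l atTop) (c : ℝ) :
    Tendsto (fun a => Real.exp (c / g a)) l (𝓝 1) :=
  (continuous_exp.tendsto' 0 1 exp_zero).comp (tendsto_const_nhds.div_atTop hg)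

theorem tendsto_sq_add_one_atTop : Tendsto (fun x : ℝ => x ^ 2 + 1) atTop atTop :=
  tendsto_atTop_add_const_right _ 1 (tendsto_pow_atTop two_ne_zero)

theorem tendsto_div_sqrt_sq_add_one :
    Tendsto (fun x : ℝ => x / √(x ^ 2 + 1)) atTop (𝓝 1) := by
  have h0 : Tendsto (fun x : ℝ => 1 / (x ^ 2 + 1)) atTop (𝓝 0) :=
    tendsto_const_nhds.div_atTop tendsto_sq_add_one_atTop
  have h : Tendsto (fun x : ℝ => √(1 - 1 / (x ^ 2 + 1))) atTop (𝓝 √(1 - 0)) :=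
    (continuous_sqrt.tendsto _).comp (h0.const_sub 1)
  rw [sub_zero, sqrt_one] at h
  refine h.congr' ?_
  filter_upwards [eventually_ge_atTop 0] with x hx
  have hsub : 1 - 1 / (x ^ 2 + 1) = x ^ 2 / (x ^ 2 + 1) := by field_simp; ring
  rw [hsub, sqrt_div (sq_nonneg x), sqrt_sq hx]

theorem tendsto_pow_four_mul_exp_sub_one (c : ℝ) :
    Tendsto (fun x : ℝ => x ^ 4 * (exp (c / (2 * x ^ 2 * (x ^ 2 + 1))) - 1)) atTop
      (𝓝 (c / 2)) := by
  have hg : Tendsto (fun x : ℝ => 2 * x ^ 2 * (x ^ 2 + 1)) atTop atTop :=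
    ((tendsto_pow_atTop two_ne_zero).const_mul_atTop two_pos).atTop_mul_atTop₀
      tendsto_sq_add_one_atTop
  have h0 : Tendsto (fun x : ℝ => 1 / (2 * (x ^ 2 + 1))) atTop (𝓝 0) :=
    tendsto_const_nhds.div_atTop (tendsto_sq_add_one_atTop.const_mul_atTop two_pos)
  have hratio : Tendsto (fun x : ℝ => 1 / 2 - 1 / (2 * (x ^ 2 + 1))) atTop (𝓝 (1 / 2)) := by
    simpa only [sub_zero] using h0.const_sub (1 / 2)
  have h := (hg.mul_exp_div_sub_one c).mul hratio
  rw [← div_eq_mul_one_div] at h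
  refine h.congr' ?_
  filter_upwards [eventually_gt_atTop 0] with x hx
  field_simp
  ring

theorem tendsto_sq_mul_exp_div_sq_sub_one (c : ℝ) :
    Tendsto (fun ℓ : ℝ => ℓ ^ 2 * (exp (c / ℓ ^ 2) - 1)) atTop (𝓝 c) :=
  (tendsto_pow_atTop two_ne_zero).mul_exp_div_sub_one c

section Weights

variable {c ℓ : ℝ}

theorem exp_div_sq_sub_one_ne_zero (hc : c ≠ 0) (hℓ : ℓ ≠ 0) : exp (c / ℓ ^ 2) - 1 ≠ 0 :=
  sub_ne_zero.2 (exp_eq_one_iff _ |>.not.2 (div_ne_zero hc (pow_ne_zero 2 hℓ)))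

theorem gpq_center_weight_eq (hc : c ≠ 0) (hℓ : 0 < ℓ) :
    exp (-c / (2 * (ℓ ^ 2 + 1))) * ℓ *
        (exp (c / (2 * (ℓ ^ 2 + 1))) - 2 * exp (3 * c / (2 * ℓ ^ 2))
          + exp (c / (2 * (ℓ ^ 2 + 1))) * exp (2 * c / ℓ ^ 2)) /
      (√(ℓ ^ 2 + 1) * (exp (c / ℓ ^ 2) - 1) ^ 2) =
    ℓ / √(ℓ ^ 2 + 1) *
      (1 - 2 * exp (c / ℓ ^ 2) * (ℓ ^ 4 * (exp (c / (2 * ℓ ^ 2 * (ℓ ^ 2 + 1))) - 1)) /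
        (ℓ ^ 2 * (exp (c / ℓ ^ 2) - 1)) ^ 2) := by
  have hsqrt : √(ℓ ^ 2 + 1) ≠ 0 := (sqrt_pos.2 (by positivity)).ne'
  have hE := exp_div_sq_sub_one_ne_zero hc hℓ.ne'
  have h3 : exp (3 * c / (2 * ℓ ^ 2)) = exp (c / (2 * (ℓ ^ 2 + 1))) * exp (c / ℓ ^ 2) *
      exp (c / (2 * ℓ ^ 2 * (ℓ ^ 2 + 1))) := by
    rw [← exp_add, ← exp_add]
    congr 1
    field_simp
    ring
  have h2 : exp (2 * c / ℓ ^ 2) = exp (c / ℓ ^ 2) * exp (c / ℓ ^ 2) := by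
    rw [← exp_add]
    ring_nf
  rw [h3, h2, neg_div, exp_neg]
  field_simp
  ring

theorem gpq_side_weight_eq (hc : c ≠ 0) (hℓ : 0 < ℓ) :
    -(ℓ * exp ((2 * ℓ ^ 2 + 3) * c / (2 * ℓ ^ 2 * (ℓ ^ 2 + 1))) *
        (exp (c / (2 * (ℓ ^ 2 + 1))) - exp (c / (2 * ℓ ^ 2)))) /
      (√(ℓ ^ 2 + 1) * (exp (c / ℓ ^ 2) - 1) ^ 2) =
    ℓ / √(ℓ ^ 2 + 1) * exp (c / ℓ ^ 2) * exp (c / (2 * ℓ ^ 2)) *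
      (ℓ ^ 4 * (exp (c / (2 * ℓ ^ 2 * (ℓ ^ 2 + 1))) - 1)) /
        (ℓ ^ 2 * (exp (c / ℓ ^ 2) - 1)) ^ 2 := by
  have hsqrt : √(ℓ ^ 2 + 1) ≠ 0 := (sqrt_pos.2 (by positivity)).ne'
  have hE := exp_div_sq_sub_one_ne_zero hc hℓ.ne'
  have hhalf : exp (c / (2 * ℓ ^ 2)) =
      exp (c / (2 * (ℓ ^ 2 + 1))) * exp (c / (2 * ℓ ^ 2 * (ℓ ^ 2 + 1))) := by
    rw [← exp_add]
    congr 1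
    field_simp
  have hlead : exp ((2 * ℓ ^ 2 + 3) * c / (2 * ℓ ^ 2 * (ℓ ^ 2 + 1))) =
      exp (c / ℓ ^ 2) * exp (c / (2 * ℓ ^ 2 * (ℓ ^ 2 + 1))) := by
    rw [← exp_add]
    congr 1
    field_simp
    ring
  rw [hhalf, hlead]
  field_simp
  ring

theorem tendsto_gpq_center_weight (hc : c ≠ 0) :
    Tendsto (fun ℓ : ℝ =>
        exp (-c / (2 * (ℓ ^ 2 + 1))) * ℓ *
            (exp (c / (2 * (ℓ ^ 2 + 1))) - 2 * exp (3 * c / (2 * ℓ ^ 2))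
              + exp (c / (2 * (ℓ ^ 2 + 1))) * exp (2 * c / ℓ ^ 2)) /
          (√(ℓ ^ 2 + 1) * (exp (c / ℓ ^ 2) - 1) ^ 2))
      atTop (𝓝 ((c - 1) / c)) := by
  have h := tendsto_div_sqrt_sq_add_one.mul <| Tendsto.const_sub 1 <|
    ((((tendsto_pow_atTop two_ne_zero).exp_div_atTop c).const_mul 2).mul
      (tendsto_pow_four_mul_exp_sub_one c)).div
        ((tendsto_sq_mul_exp_div_sq_sub_one c).pow 2) (pow_ne_zero 2 hc)
  have hlim : (1 : ℝ) * (1 - 2 * 1 * (c / 2) / c ^ 2) = (c - 1) / c := by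
    field_simp
  rw [hlim] at h
  refine h.congr' ?_
  filter_upwards [eventually_gt_atTop 0] with ℓ hℓ
  exact (gpq_center_weight_eq hc hℓ).symm

theorem tendsto_gpq_side_weight (hc : c ≠ 0) :
    Tendsto (fun ℓ : ℝ =>
        -(ℓ * exp ((2 * ℓ ^ 2 + 3) * c / (2 * ℓ ^ 2 * (ℓ ^ 2 + 1))) *
            (exp (c / (2 * (ℓ ^ 2 + 1))) - exp (c / (2 * ℓ ^ 2)))) /
          (√(ℓ ^ 2 + 1) * (exp (c / ℓ ^ 2) - 1) ^ 2))
      atTop (𝓝 (1 / (2 * c))) := by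
  have hsq := tendsto_pow_atTop (α := ℝ) two_ne_zero
  have h := (((tendsto_div_sqrt_sq_add_one.mul (hsq.exp_div_atTop c)).mul
    ((hsq.const_mul_atTop two_pos).exp_div_atTop c)).mul
      (tendsto_pow_four_mul_exp_sub_one c)).div
        ((tendsto_sq_mul_exp_div_sq_sub_one c).pow 2) (pow_ne_zero 2 hc)
  have hlim : (1 : ℝ) * 1 * 1 * (c / 2) / c ^ 2 = 1 / (2 * c) := by
    field_simp
  rw [hlim] at h
  refine h.congr' ?_
  filter_upwards [eventually_gt_atTop 0] with ℓ hℓ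
  exact (gpq_side_weight_eq hc hℓ).symm

end Weights

theorem gpq_se_weights_tendsto_ut_weights (κ : ℝ) (hκ : 0 < κ) :
    Tendsto
      (fun ℓ : ℝ =>
        Real.exp (-(κ + 1) / (2 * (ℓ ^ 2 + 1))) * ℓ *
            (Real.exp ((κ + 1) / (2 * (ℓ ^ 2 + 1)))
              - 2 * Real.exp (3 * (κ + 1) / (2 * ℓ ^ 2))
              + Real.exp ((κ + 1) / (2 * (ℓ ^ 2 + 1))) * Real.exp (2 * (κ + 1) / ℓ ^ 2)) /
          (Real.sqrt (ℓ ^ 2 + 1) * (Real.exp ((κ + 1) / ℓ ^ 2) - 1) ^ 2))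
      atTop (nhds (κ / (κ + 1)))
    ∧
    Tendsto
      (fun ℓ : ℝ =>
        -(ℓ * Real.exp ((2 * ℓ ^ 2 + 3) * (κ + 1) / (2 * ℓ ^ 2 * (ℓ ^ 2 + 1))) *
            (Real.exp ((κ + 1) / (2 * (ℓ ^ 2 + 1))) - Real.exp ((κ + 1) / (2 * ℓ ^ 2)))) /
          (Real.sqrt (ℓ ^ 2 + 1) * (Real.exp ((κ + 1) / ℓ ^ 2) - 1) ^ 2))
      atTop (nhds (1 / (2 * (κ + 1)))) := by
  have hc : κ + 1 ≠ 0 := by positivity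
  refine ⟨?_, tendsto_gpq_side_weight hc⟩
  simpa only [add_sub_cancel_right] using tendsto_gpq_center_weight hc
end

section
/- If a quadrature rule (weights W_i, nodes ξ_i, i = 1,...,N) integrates exactly all functions of the form g(ξ) = ∑_{|I| ≤ P} c_I H_I(ξ) for arbitrary coefficients c_I against N(0, I_n), then the posterior variance of the Gaussian process quadrature with covariance K(ξ,ξ') = ∑_{|I|,|J| ≤ P} (1/(I! J!)) λ_{I,J} H_I(ξ) H_J(ξ') is zero, for any symmetric positive semidefinite matrix Λ = [λ_{I,J}]. -/
open MeasureTheory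

/-- Probabilists' Hermite polynomial via the Rodrigues formula. -/
noncomputable def hermiteP (p : ℕ) (x : ℝ) : ℝ :=
  (-1) ^ p * Real.exp (x ^ 2 / 2) *
    iteratedDeriv p (fun y : ℝ => Real.exp (-y ^ 2 / 2)) x

/-- Multivariate probabilists' Hermite polynomial indexed by a multi-index. -/
noncomputable def hermiteMulti {n : ℕ} (I : Fin n → ℕ) (x : Fin n → ℝ) : ℝ :=
  ∏ k, hermiteP (I k) (x k)

/-- The set of multi-indices of dimension `n` with total degree at most `P`. -/
def multiIdx (n P : ℕ) : Finset (Fin n → ℕ) :=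
  (Fintype.piFinset fun _ : Fin n => Finset.range (P + 1)).filter fun I => ∑ k, I k ≤ P

/-- Multi-index factorial `I! = i₁! ⋯ iₙ!` as a real number. -/
noncomputable def mfact {n : ℕ} (I : Fin n → ℕ) : ℝ :=
  ∏ k, ((I k).factorial : ℝ)

/-- Standard `n`-dimensional Gaussian density. -/
noncomputable def stdGauss (n : ℕ) (x : Fin n → ℝ) : ℝ :=
  ((Real.sqrt (2 * Real.pi)) ^ n)⁻¹ * Real.exp (-(∑ k, (x k) ^ 2) / 2)

/-!
The posterior variance `∬ K - k̄ᵀ G⁻¹ k̄` vanishes as soon as every section `K(·, v)`, `K(u, ·)`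
of the kernel lies in a space `V` on which the quadrature rule is exact; here `V` is the span of
the Hermite polynomials of degree `≤ P`. Exactness on `K(·, ξᵢ)` gives `k̄ = Wᵀ G`, hence
`k̄ᵀ G⁻¹ k̄ = Wᵀ G W`. Integrating first in `v` turns the double integral into the integral of
`u ↦ ∑ⱼ Wⱼ K(u, ξⱼ) ∈ V`, which is again `Wᵀ G W`.
-/

open Matrix

theorem Matrix.vecMul_dotProduct_inv_mulVec_vecMul {m R : Type*} [Fintype m] [DecidableEq m]
    [CommRing R] {G : Matrix m m R} (hG : IsUnit G.det) (w : m → R) :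
    (w ᵥ* G) ⬝ᵥ (G⁻¹ *ᵥ (w ᵥ* G)) = w ⬝ᵥ (G *ᵥ w) := by
  rw [← dotProduct_mulVec, mulVec_mulVec, mul_nonsing_inv G hG, one_mulVec, dotProduct_mulVec,
    dotProduct_comm]

section SpanKernel

variable {X ι : Type*} {s : Finset ι} {b : ι → X → ℝ}

theorem mem_span_image_of_eq_sum {f : X → ℝ} (c : ι → ℝ) (hf : ∀ u, f u = ∑ I ∈ s, c I * b I u) :
    f ∈ Submodule.span ℝ (b '' s) :=
  (Submodule.mem_span_image_finset_iff_exists_fun' ℝ).mpr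
    ⟨c, funext fun u => by simp only [hf, Finset.sum_apply, Pi.smul_apply, smul_eq_mul]⟩

variable {a : ι → ι → ℝ} {K : X → X → ℝ}

theorem apply_mem_span_image_of_eq_sum_sum
    (hK : ∀ u v, K u v = ∑ I ∈ s, ∑ J ∈ s, a I J * b I u * b J v) (u : X) :
    K u ∈ Submodule.span ℝ (b '' s) :=
  mem_span_image_of_eq_sum (fun J => ∑ I ∈ s, a I J * b I u) fun v => by
    rw [hK, Finset.sum_comm]
    simp only [Finset.sum_mul]

theorem flip_apply_mem_span_image_of_eq_sum_sum
    (hK : ∀ u v, K u v = ∑ I ∈ s, ∑ J ∈ s, a I J * b I u * b J v) (v : X) :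
    (K · v) ∈ Submodule.span ℝ (b '' s) :=
  mem_span_image_of_eq_sum (fun I => ∑ J ∈ s, a I J * b J v) fun u => by
    simp only [hK, Finset.sum_mul]
    exact Finset.sum_congr rfl fun I _ => Finset.sum_congr rfl fun J _ => by ring

end SpanKernel

section Quadrature

variable {X κ : Type*} [MeasurableSpace X] [Fintype κ]

def QuadratureExactOn (μ : Measure X) (ρ : X → ℝ) (V : Submodule ℝ (X → ℝ)) (ξ : κ → X)
    (W : κ → ℝ) : Prop :=
  ∀ f ∈ V, ∑ i, W i * f (ξ i) = ∫ u, f u * ρ u ∂μ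

variable {μ : Measure X} {ρ : X → ℝ} {V : Submodule ℝ (X → ℝ)} {ξ : κ → X} {W : κ → ℝ}
  {K : X → X → ℝ}

theorem quadratureExactOn_span_image {ι : Type*} {s : Finset ι} {b : ι → X → ℝ}
    (h : ∀ c : ι → ℝ, ∑ i, W i * (∑ I ∈ s, c I * b I (ξ i)) =
      ∫ u, (∑ I ∈ s, c I * b I u) * ρ u ∂μ) :
    QuadratureExactOn μ ρ (Submodule.span ℝ (b '' s)) ξ W := by
  intro f hf
  obtain ⟨c, rfl⟩ := (Submodule.mem_span_image_finset_iff_exists_fun' ℝ).mp hf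
  simpa only [Finset.sum_apply, Pi.smul_apply, smul_eq_mul] using h c

theorem QuadratureExactOn.integral_integral_kernel (hV : QuadratureExactOn μ ρ V ξ W)
    (hKl : ∀ u, K u ∈ V) (hKr : ∀ v, (K · v) ∈ V) :
    ∫ u, ∫ v, K u v * ρ u * ρ v ∂μ ∂μ = ∑ i, W i * ∑ j, W j * K (ξ i) (ξ j) := by
  have hinner : ∀ u, ∫ v, K u v * ρ u * ρ v ∂μ = (∑ j, W j * K u (ξ j)) * ρ u := fun u => by
    simp_rw [mul_right_comm _ (ρ u)]
    rw [integral_mul_const, ← hV _ (hKl u)]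
  have hsum : (fun u => ∑ j, W j * K u (ξ j)) ∈ V := by
    convert V.sum_mem (t := Finset.univ) fun j _ => V.smul_mem (W j) (hKr (ξ j)) using 1
    ext u
    simp only [Finset.sum_apply, Pi.smul_apply, smul_eq_mul]
  simp_rw [hinner]
  exact (hV _ hsum).symm

theorem QuadratureExactOn.integral_integral_sub_dotProduct_inv_eq_zero
    (hV : QuadratureExactOn μ ρ V ξ W) (hKl : ∀ u, K u ∈ V) (hKr : ∀ v, (K · v) ∈ V)
    [DecidableEq κ] {G : Matrix κ κ ℝ} (hG : ∀ i j, G i j = K (ξ i) (ξ j)) (hGinv : IsUnit G.det)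
    {kbar : κ → ℝ} (hkbar : ∀ i, kbar i = ∫ u, K u (ξ i) * ρ u ∂μ) :
    (∫ u, ∫ v, K u v * ρ u * ρ v ∂μ ∂μ) - kbar ⬝ᵥ (G⁻¹ *ᵥ kbar) = 0 := by
  have hkbar_eq : kbar = W ᵥ* G := by
    ext i
    rw [hkbar, ← hV _ (hKr (ξ i))]
    simp only [vecMul, dotProduct, hG]
  rw [hkbar_eq, vecMul_dotProduct_inv_mulVec_vecMul hGinv, hV.integral_integral_kernel hKl hKr,
    sub_eq_zero]
  simp only [dotProduct, mulVec, hG, mul_comm (K _ _)]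

end Quadrature

theorem gpq_polynomial_kernel_zero_variance_general
    (n N P : ℕ) (ξ : Fin N → Fin n → ℝ) (W : Fin N → ℝ)
    (Λ : (Fin n → ℕ) → (Fin n → ℕ) → ℝ)
    (K : (Fin n → ℝ) → (Fin n → ℝ) → ℝ)
    (hK : ∀ u v, K u v = ∑ I ∈ multiIdx n P, ∑ J ∈ multiIdx n P,
      (1 / (mfact I * mfact J)) * Λ I J * hermiteMulti I u * hermiteMulti J v)
    (G : Matrix (Fin N) (Fin N) ℝ)
    (hG : ∀ i j, G i j = K (ξ i) (ξ j))
    (hGinv : IsUnit G.det)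
    (kbar : Fin N → ℝ)
    (hkbar : ∀ i, kbar i = ∫ u : Fin n → ℝ, K u (ξ i) * stdGauss n u)
    (hexact : ∀ c : (Fin n → ℕ) → ℝ,
      ∑ i, W i * (∑ I ∈ multiIdx n P, c I * hermiteMulti I (ξ i)) =
        ∫ u : Fin n → ℝ,
          (∑ I ∈ multiIdx n P, c I * hermiteMulti I u) * stdGauss n u) :
    (∫ u : Fin n → ℝ, ∫ v : Fin n → ℝ, K u v * stdGauss n u * stdGauss n v)
      - dotProduct kbar (G⁻¹.mulVec kbar) = 0 := by
  let a I J := 1 / (mfact I * mfact J) * Λ I J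
  have hKl := apply_mem_span_image_of_eq_sum_sum (a := a) hK
  have hKr := flip_apply_mem_span_image_of_eq_sum_sum (a := a) hK
  have hV : QuadratureExactOn volume (stdGauss n)
      (Submodule.span ℝ (hermiteMulti '' ↑(multiIdx n P))) ξ W :=
    quadratureExactOn_span_image hexact
  exact hV.integral_integral_sub_dotProduct_inv_eq_zero hKl hKr hG hGinv hkbar

theorem gpq_polynomial_kernel_zero_variance
    (n N P : ℕ) (ξ : Fin N → Fin n → ℝ) (W : Fin N → ℝ)
    (Λ : (Fin n → ℕ) → (Fin n → ℕ) → ℝ)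
    (hΛsymm : ∀ I J, Λ I J = Λ J I)
    (hΛpsd : ∀ c : (Fin n → ℕ) → ℝ,
      0 ≤ ∑ I ∈ multiIdx n P, ∑ J ∈ multiIdx n P, c I * c J * Λ I J)
    (K : (Fin n → ℝ) → (Fin n → ℝ) → ℝ)
    (hK : ∀ u v, K u v = ∑ I ∈ multiIdx n P, ∑ J ∈ multiIdx n P,
      (1 / (mfact I * mfact J)) * Λ I J * hermiteMulti I u * hermiteMulti J v)
    (G : Matrix (Fin N) (Fin N) ℝ)
    (hG : ∀ i j, G i j = K (ξ i) (ξ j))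
    (hGinv : IsUnit G.det)
    (kbar : Fin N → ℝ)
    (hkbar : ∀ i, kbar i = ∫ u : Fin n → ℝ, K u (ξ i) * stdGauss n u)
    (hexact : ∀ c : (Fin n → ℕ) → ℝ,
      ∑ i, W i * (∑ I ∈ multiIdx n P, c I * hermiteMulti I (ξ i)) =
        ∫ u : Fin n → ℝ,
          (∑ I ∈ multiIdx n P, c I * hermiteMulti I u) * stdGauss n u) :
    (∫ u : Fin n → ℝ, ∫ v : Fin n → ℝ, K u v * stdGauss n u * stdGauss n v)
      - dotProduct kbar (G⁻¹.mulVec kbar) = 0 :=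
  gpq_polynomial_kernel_zero_variance_general n N P ξ W Λ K hK G hG hGinv kbar hkbar hexact
end

section
/- Sigma-point covariance update preserves positive semidefiniteness: if S = Ĉ + R where Ĉ = ∑_i W_i (y_i - μ)(y_i - μ)ᵀ with W_i ≥ 0 and R positive definite, and C = ∑_i W_i (x_i - m)(y_i - μ)ᵀ is such that the block matrix [[P̂, C],[Cᵀ, Ĉ]] with P̂ = ∑_i W_i (x_i - m)(x_i - m)ᵀ is positive semidefinite, and P - P̂ is positive semidefinite, then P - C S^{-1} Cᵀ is positive semidefinite. -/
/-!
Adding the positive definite `R` to the lower-right corner of the positive semidefinite block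
matrix `[[P̂, C], [Cᵀ, Ĉ]]` keeps it positive semidefinite and turns that corner into the positive
definite, hence invertible, `S = Ĉ + R`. The Schur complement criterion then gives
`P̂ - C S⁻¹ Cᵀ ⪰ 0`, and adding `P - P̂ ⪰ 0` yields `P - C S⁻¹ Cᵀ ⪰ 0`.
-/

open Matrix

namespace Matrix

variable {m n R : Type*} [Ring R] [PartialOrder R] [StarRing R]

theorem PosSemidef.toBlocks₂₂ {M : Matrix (m ⊕ n) (m ⊕ n) R} (hM : M.PosSemidef) :
    M.toBlocks₂₂.PosSemidef :=
  hM.submatrix Sum.inr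

variable [Fintype m] [Fintype n] [DecidableEq n]

theorem PosSemidef.fromBlocks_zero_zero_zero {D : Matrix n n R} (hD : D.PosSemidef) :
    (fromBlocks (0 : Matrix m m R) 0 0 D).PosSemidef := by
  convert hD.conjTranspose_mul_mul_same (fromCols (0 : Matrix n m R) (1 : Matrix n n R))
  simp [conjTranspose_fromCols_eq_fromRows_conjTranspose, fromRows_mul, mul_fromCols,
    ← fromCols_fromRows_eq_fromBlocks, ← fromRows_zero]

theorem PosSemidef.fromBlocks_add₂₂ [StarOrderedRing R] {A : Matrix m m R} {B : Matrix m n R}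
    {C : Matrix n m R} {D E : Matrix n n R} (hM : (fromBlocks A B C D).PosSemidef)
    (hE : E.PosSemidef) : (fromBlocks A B C (D + E)).PosSemidef := by
  simpa [fromBlocks_add] using hM.add (hE.fromBlocks_zero_zero_zero (m := m))

theorem PosSemidef.sub_mul_add_inv_mul_conjTranspose {𝕜 : Type*} [Field 𝕜] [PartialOrder 𝕜]
    [StarRing 𝕜] [StarOrderedRing 𝕜] {A : Matrix m m 𝕜} {B : Matrix m n 𝕜} {D E : Matrix n n 𝕜}
    (hM : (fromBlocks A B Bᴴ D).PosSemidef) (hE : E.PosDef) :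
    (A - B * (D + E)⁻¹ * Bᴴ).PosSemidef := by
  have hDE : (D + E).PosDef := hE.posSemidef_add (by simpa using hM.toBlocks₂₂)
  have := hDE.isUnit.invertible
  exact (PosDef.fromBlocks₂₂ A B hDE).mp (hM.fromBlocks_add₂₂ hE.posSemidef)

end Matrix

theorem sigma_point_update_posSemidef_general
    (n d : ℕ)
    (P : Matrix (Fin n) (Fin n) ℝ)
    (R : Matrix (Fin d) (Fin d) ℝ) (hR : R.PosDef)
    (Phat : Matrix (Fin n) (Fin n) ℝ)
    (Chat : Matrix (Fin d) (Fin d) ℝ)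
    (C : Matrix (Fin n) (Fin d) ℝ)
    (hblock : (Matrix.fromBlocks Phat C Cᵀ Chat).PosSemidef)
    (hPP : (P - Phat).PosSemidef)
    (S : Matrix (Fin d) (Fin d) ℝ) (hS : S = Chat + R) :
    (P - C * S⁻¹ * Cᵀ).PosSemidef := by
  have hSchur : (Phat - C * S⁻¹ * Cᵀ).PosSemidef := by
    rw [hS]
    rw [← conjTranspose_eq_transpose_of_trivial] at hblock ⊢
    exact hblock.sub_mul_add_inv_mul_conjTranspose hR
  simpa only [sub_add_sub_cancel] using hPP.add hSchur

theorem sigma_point_update_posSemidef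
    (n d N : ℕ) (x : Fin N → Fin n → ℝ) (y : Fin N → Fin d → ℝ)
    (W : Fin N → ℝ) (hW : ∀ i, 0 ≤ W i)
    (m : Fin n → ℝ) (μ : Fin d → ℝ)
    (P : Matrix (Fin n) (Fin n) ℝ) (hPsymm : P.IsSymm)
    (R : Matrix (Fin d) (Fin d) ℝ) (hR : R.PosDef)
    (Phat : Matrix (Fin n) (Fin n) ℝ)
    (hPhat : ∀ a b, Phat a b = ∑ i, W i * ((x i a - m a) * (x i b - m b)))
    (Chat : Matrix (Fin d) (Fin d) ℝ)
    (hChat : ∀ a b, Chat a b = ∑ i, W i * ((y i a - μ a) * (y i b - μ b)))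
    (C : Matrix (Fin n) (Fin d) ℝ)
    (hC : ∀ a b, C a b = ∑ i, W i * ((x i a - m a) * (y i b - μ b)))
    (hblock : (Matrix.fromBlocks Phat C Cᵀ Chat).PosSemidef)
    (hPP : (P - Phat).PosSemidef)
    (S : Matrix (Fin d) (Fin d) ℝ) (hS : S = Chat + R) :
    (P - C * S⁻¹ * Cᵀ).PosSemidef :=
  sigma_point_update_posSemidef_general n d P R hR Phat Chat C hblock hPP S hS
end
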